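/- arXiv:math/0411592 — 4 statements merged into one kernel-verified Lean document; each statement's English description precedes it below -/
import Mathlib

section
/- Let l, m be natural numbers, let X : ℝ^l × ℝ^m → ℝ^l × ℝ^m be a C¹ vector field tangent to N = ℝ^l × {0} along N, i.e. the second component X₂(x',0) vanishes for every x' ∈ ℝ^l, and let η : ℝ^l → ℝ^m be C¹. Define the vector field Y on ℝ^l × ℝ^m by Y(x', x'') = (0, η(x')). Then for every x' ∈ ℝ^l, the second component of the Lie bracket [X, Y] at (x',0) equals (Dη)_{x'}(X₁(x',0)) − (D_v X₂(x',v)|_{v=0})(η(x')), where X₁, X₂ denote the two components of X and D_v X₂(x',v)|_{v=0} is the Fréchet derivative of the map v ↦ X₂(x',v) : ℝ^m → ℝ^m at v = 0. (This is the coordinate expression for the covariant derivative ∇_X η of the K-partial connection of Proposition 1.1 on the normal bundle of N.) -/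
open ContinuousLinearMap

section

variable {𝕜 E F : Type*} [NontriviallyNormedField 𝕜]
  [NormedAddCommGroup E] [NormedSpace 𝕜 E] [NormedAddCommGroup F] [NormedSpace 𝕜 F]

theorem fderiv_snd_apply_inr {X : E × F → E × F} {x : E} {y : F}
    (hX : DifferentiableAt 𝕜 X (x, y)) (w : F) :
    (fderiv 𝕜 X (x, y) (0, w)).2 = fderiv 𝕜 (fun v => (X (x, v)).2) y w := by
  have hslice : HasFDerivAt (fun v => (X (x, v)).2)
      ((snd 𝕜 E F).comp ((fderiv 𝕜 X (x, y)).comp (inr 𝕜 E F))) y :=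
    (snd 𝕜 E F).hasFDerivAt.comp y
      (hX.hasFDerivAt.comp y (hasFDerivAt_prodMk_right x y))
  simp [hslice.fderiv]

theorem fderiv_vertical_lift_snd_apply {η : E → F} {p : E × F}
    (hη : DifferentiableAt 𝕜 η p.1) (v : E × F) :
    (fderiv 𝕜 (fun q : E × F => ((0 : E), η q.1)) p v).2 = fderiv 𝕜 η p.1 v.1 := by
  have hY : HasFDerivAt (fun q : E × F => ((0 : E), η q.1))
      ((0 : E × F →L[𝕜] E).prod ((fderiv 𝕜 η p.1).comp (fst 𝕜 E F))) p :=
    (hasFDerivAt_const 0 p).prodMk (hη.hasFDerivAt.comp p hasFDerivAt_fst)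
  simp [hY.fderiv]

theorem lieBracket_vertical_lift_snd {X : E × F → E × F} {η : E → F} {x : E} {y : F}
    (hX : DifferentiableAt 𝕜 X (x, y)) (hη : DifferentiableAt 𝕜 η x) :
    (VectorField.lieBracket 𝕜 X (fun q => ((0 : E), η q.1)) (x, y)).2 =
      fderiv 𝕜 η x (X (x, y)).1 - fderiv 𝕜 (fun v => (X (x, v)).2) y (η x) := by
  rw [VectorField.lieBracket_eq, Prod.snd_sub, fderiv_vertical_lift_snd_apply hη,
    fderiv_snd_apply_inr hX]

end

theorem lieBracket_second_component_eq_general (l m : ℕ)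
    (X : EuclideanSpace ℝ (Fin l) × EuclideanSpace ℝ (Fin m) →
         EuclideanSpace ℝ (Fin l) × EuclideanSpace ℝ (Fin m))
    (η : EuclideanSpace ℝ (Fin l) → EuclideanSpace ℝ (Fin m))
    (hX : ContDiff ℝ 1 X) (hη : ContDiff ℝ 1 η) :
    ∀ x' : EuclideanSpace ℝ (Fin l),
      (VectorField.lieBracket ℝ X
        (fun p => ((0 : EuclideanSpace ℝ (Fin l)), η p.1)) (x', 0)).2 =
      fderiv ℝ η x' ((X (x', 0)).1) -
        fderiv ℝ (fun v : EuclideanSpace ℝ (Fin m) => (X (x', v)).2) 0 (η x') :=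
  fun _ => lieBracket_vertical_lift_snd (hX.differentiable one_ne_zero _)
    (hη.differentiable one_ne_zero _)

/-- Coordinate expression for the covariant derivative of the partial connection on the
normal bundle of `N = ℝ^l × {0}`: if `X` is a C¹ vector field tangent to `N` along `N`
and `Y(x',x'') = (0, η(x'))`, then the second component of `[X,Y]` at `(x',0)` equals
`(Dη)_{x'}(X₁(x',0)) − (D_v X₂(x',v)|_{v=0})(η(x'))`. -/
theorem lieBracket_second_component_eq (l m : ℕ)
    (X : EuclideanSpace ℝ (Fin l) × EuclideanSpace ℝ (Fin m) →
         EuclideanSpace ℝ (Fin l) × EuclideanSpace ℝ (Fin m))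
    (η : EuclideanSpace ℝ (Fin l) → EuclideanSpace ℝ (Fin m))
    (hX : ContDiff ℝ 1 X) (hη : ContDiff ℝ 1 η)
    (hXtan : ∀ x' : EuclideanSpace ℝ (Fin l), (X (x', 0)).2 = 0) :
    ∀ x' : EuclideanSpace ℝ (Fin l),
      (VectorField.lieBracket ℝ X
        (fun p => ((0 : EuclideanSpace ℝ (Fin l)), η p.1)) (x', 0)).2 =
      fderiv ℝ η x' ((X (x', 0)).1) -
        fderiv ℝ (fun v : EuclideanSpace ℝ (Fin m) => (X (x', v)).2) 0 (η x') :=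
  lieBracket_second_component_eq_general l m X η hX hη
end

section
/- Let l, m be natural numbers, let X : ℝ^l × ℝ^m → ℝ^l × ℝ^m be a C¹ vector field tangent to N = ℝ^l × {0} along N (its second component X₂(x',0) vanishes for every x'), and let I ⊆ ℝ be an open interval. Let c : ℝ → ℝ^l satisfy, for every t ∈ I, c'(t) = X₁(c(t), 0) (so γ(t) = (c(t),0) is an integral curve of X lying in N), and let w : ℝ → ℝ^l × ℝ^m satisfy the variational (linearized flow) equation w'(t) = (DX)_{(c(t),0)}(w(t)) for every t ∈ I. Then the second component η(t) := w₂(t) satisfies the linear ODE η'(t) = (D_v X₂(c(t), v)|_{v=0})(η(t)) for every t ∈ I, i.e. η is a horizontal lift of γ with respect to the partial connection ∇. (This proves Proposition 1.2: the parallel translation in the normal bundle of N along an integral curve of a K-tangent vector field X is induced by the differential of the flow of X.) -/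
open ContinuousLinearMap

section PartialDerivatives

variable {𝕜 : Type*} [NontriviallyNormedField 𝕜]
  {E F G : Type*} [NormedAddCommGroup E] [NormedSpace 𝕜 E] [NormedAddCommGroup F]
  [NormedSpace 𝕜 F] [NormedAddCommGroup G] [NormedSpace 𝕜 G]
  {f : E × F → G} {L : E × F →L[𝕜] G} {x₀ : E}

theorem HasFDerivAt.comp_inl_eq_zero_of_forall_eq_zero (hf : HasFDerivAt f L (x₀, 0))
    (h0 : ∀ x, f (x, 0) = 0) : L.comp (inl 𝕜 E F) = 0 := by
  have hconst : HasFDerivAt (fun x => f (x, 0)) (0 : E →L[𝕜] G) x₀ := by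
    simpa only [h0] using hasFDerivAt_const (0 : G) x₀
  exact (hf.comp x₀ (hasFDerivAt_prodMk_left x₀ 0)).unique hconst

theorem HasFDerivAt.apply_eq_fderiv_snd_of_forall_eq_zero (hf : HasFDerivAt f L (x₀, 0))
    (h0 : ∀ x, f (x, 0) = 0) (p : E × F) :
    L p = fderiv 𝕜 (fun v => f (x₀, v)) 0 p.2 := by
  have hslice : HasFDerivAt (fun v => f (x₀, v)) (L.comp (inr 𝕜 E F)) 0 :=
    hf.comp 0 (hasFDerivAt_prodMk_right x₀ 0)
  rw [← L.comp_inl_add_comp_inr p, hf.comp_inl_eq_zero_of_forall_eq_zero h0, hslice.fderiv,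
    zero_apply, zero_add]

end PartialDerivatives

theorem normal_component_of_variational_solves_horizontal_lift_general (l m : ℕ)
    (X : EuclideanSpace ℝ (Fin l) × EuclideanSpace ℝ (Fin m) →
         EuclideanSpace ℝ (Fin l) × EuclideanSpace ℝ (Fin m))
    (hX : ContDiff ℝ 1 X)
    (hXtan : ∀ x' : EuclideanSpace ℝ (Fin l), (X (x', 0)).2 = 0)
    (I : Set ℝ)
    (c : ℝ → EuclideanSpace ℝ (Fin l))
    (w : ℝ → EuclideanSpace ℝ (Fin l) × EuclideanSpace ℝ (Fin m))
    (hw : ∀ t ∈ I, HasDerivAt w (fderiv ℝ X (c t, 0) (w t)) t) :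
    ∀ t ∈ I, HasDerivAt (fun s => (w s).2)
      (fderiv ℝ (fun v : EuclideanSpace ℝ (Fin m) => (X (c t, v)).2) 0 ((w t).2)) t := by
  intro t ht
  have hX₂ : HasFDerivAt (fun p => (X p).2) ((snd ℝ _ _).comp (fderiv ℝ X (c t, 0))) (c t, 0) :=
    hasFDerivAt_snd.comp _ ((hX.differentiable one_ne_zero _).hasFDerivAt)
  rw [← hX₂.apply_eq_fderiv_snd_of_forall_eq_zero hXtan (w t)]
  exact (hw t ht).snd

/-- Proposition 1.2: along an integral curve `γ(t) = (c(t),0)` of a C¹ vector field `X`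
tangent to `N = ℝ^l × {0}` along `N`, if `w` solves the variational (linearized flow)
equation `w' = (DX)_{γ(t)}(w)`, then the second (normal) component `η = w₂` solves the
horizontal-lift equation `η'(t) = (D_v X₂(c(t),v)|_{v=0})(η(t))` of the partial
connection: the parallel translation in the normal bundle is induced by the differential
of the flow of `X`. -/
theorem normal_component_of_variational_solves_horizontal_lift (l m : ℕ)
    (X : EuclideanSpace ℝ (Fin l) × EuclideanSpace ℝ (Fin m) →
         EuclideanSpace ℝ (Fin l) × EuclideanSpace ℝ (Fin m))
    (hX : ContDiff ℝ 1 X)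
    (hXtan : ∀ x' : EuclideanSpace ℝ (Fin l), (X (x', 0)).2 = 0)
    (I : Set ℝ) (hI : IsOpen I) (hI' : I.OrdConnected)
    (c : ℝ → EuclideanSpace ℝ (Fin l))
    (hc : ∀ t ∈ I, HasDerivAt c ((X (c t, 0)).1) t)
    (w : ℝ → EuclideanSpace ℝ (Fin l) × EuclideanSpace ℝ (Fin m))
    (hw : ∀ t ∈ I, HasDerivAt w (fderiv ℝ X (c t, 0) (w t)) t) :
    ∀ t ∈ I, HasDerivAt (fun s => (w s).2)
      (fderiv ℝ (fun v : EuclideanSpace ℝ (Fin m) => (X (c t, v)).2) 0 ((w t).2)) t :=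
  normal_component_of_variational_solves_horizontal_lift_general l m X hX hXtan I c w hw
end

section
/- Let l, m be natural numbers and let a : ℝ^l × ℝ^m → ℝ^l × ℝ^m be a C¹ vector field tangent to N = ℝ^l × {0} along N, i.e. the second component a₂(x',0) vanishes for every x' ∈ ℝ^l. Fix x' ∈ ℝ^l and ξ'' ∈ ℝ^m and set ξ = (0, ξ'') ∈ ℝ^l × ℝ^m. Then the Fréchet derivative at the point (x',0) of the symbol function x ↦ ⟪ξ, a(x)⟫ satisfies, for every (h,k) ∈ ℝ^l × ℝ^m: d(⟪ξ, a(·)⟫)_{(x',0)}(h,k) = ⟪ξ'', (D_v a₂(x',v)|_{v=0})(k)⟫. In particular this derivative vanishes on ℝ^l × {0}, so the Hamiltonian vector field H_{σ(X)}(x,ξ) = (∂f/∂ξ, −∂f/∂x) of the symbol f(x,ξ) = ⟪ξ, a(x)⟫, evaluated at the conormal point ((x',0),(0,ξ'')), is tangent to the conormal bundle (ℝ^l × {0}) × ({0} × ℝ^m) and equals ((a₁(x',0), 0), (0, −B*ξ'')), where B = D_v a₂(x',v)|_{v=0} and B* is its adjoint with respect to the Euclidean inner product. (This is the computation identifying the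 restricted Hamiltonian field H_{σ(X)}|_{T*_N M} with the vector field X̂ generating parallel translation for the dual partial connection ∇*.) -/
/-! At a point of `N`, the symbol `⟪(0, ξ''), a(x)⟫ = ⟪ξ'', a₂(x)⟫` only sees the normal
component `a₂`. Since `a₂` vanishes identically on `N`, its derivative at `(x', 0)` kills
tangential directions, so `d a₂ (h, k) = B k`; the `x`-gradient is then `(0, B*ξ'')`. The
symbol is linear in `ξ`, so its `ξ`-gradient is `a(x', 0) = (a₁(x', 0), 0)`. -/

/-- The Euclidean inner product on `ℝ^l × ℝ^m`. -/
noncomputable def prodInner (l m : ℕ)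
    (p q : EuclideanSpace ℝ (Fin l) × EuclideanSpace ℝ (Fin m)) : ℝ :=
  inner ℝ p.1 q.1 + inner ℝ p.2 q.2

open ContinuousLinearMap

section Partial

variable {𝕜 E F G : Type*} [NontriviallyNormedField 𝕜]
  [NormedAddCommGroup E] [NormedSpace 𝕜 E] [NormedAddCommGroup F] [NormedSpace 𝕜 F]
  [NormedAddCommGroup G] [NormedSpace 𝕜 G]

theorem fderiv_apply_eq_fderiv_snd_of_const_fst {g : E × F → G} {x : E} {y : F} {c : G}
    (hg : DifferentiableAt 𝕜 g (x, y)) (hconst : ∀ u, g (u, y) = c) (h : E) (k : F) :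
    fderiv 𝕜 g (x, y) (h, k) = fderiv 𝕜 (fun v => g (x, v)) y k := by
  have htangent : fderiv 𝕜 g (x, y) (h, 0) = 0 := by
    have hcomp := hg.hasFDerivAt.comp x (hasFDerivAt_prodMk_left (𝕜 := 𝕜) x y)
    have hconst' : HasFDerivAt (g ∘ fun u => (u, y)) (0 : E →L[𝕜] G) x := by
      rw [show (g ∘ fun u => (u, y)) = fun _ => c from funext hconst]
      exact hasFDerivAt_const c x
    simpa using DFunLike.congr_fun (hcomp.unique hconst') h
  have hnormal : fderiv 𝕜 (fun v => g (x, v)) y = (fderiv 𝕜 g (x, y)).comp (inr 𝕜 E F) :=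
    (hg.hasFDerivAt.comp y (hasFDerivAt_prodMk_right (𝕜 := 𝕜) x y)).fderiv
  calc fderiv 𝕜 g (x, y) (h, k) = fderiv 𝕜 g (x, y) (h, 0) + fderiv 𝕜 g (x, y) (0, k) := by
        rw [← map_add, Prod.mk_add_mk, add_zero, zero_add]
    _ = fderiv 𝕜 (fun v => g (x, v)) y k := by simp [htangent, hnormal]

end Partial

section ProdInner

variable {l m : ℕ}

theorem prodInner_zero_left (v : EuclideanSpace ℝ (Fin m))
    (q : EuclideanSpace ℝ (Fin l) × EuclideanSpace ℝ (Fin m)) :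
    prodInner l m (0, v) q = inner ℝ v q.2 := by
  simp [prodInner]

theorem fderiv_prodInner_left (q ζ w : EuclideanSpace ℝ (Fin l) × EuclideanSpace ℝ (Fin m)) :
    fderiv ℝ (fun ζ => prodInner l m ζ q) ζ w = prodInner l m q w := by
  have hlin : (fun ζ => prodInner l m ζ q) =
      ⇑((innerSL ℝ q.1).comp (fst ℝ (EuclideanSpace ℝ (Fin l)) (EuclideanSpace ℝ (Fin m))) +
        (innerSL ℝ q.2).comp (snd ℝ (EuclideanSpace ℝ (Fin l)) (EuclideanSpace ℝ (Fin m)))) := by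
    ext ζ
    simp [prodInner, real_inner_comm]
  rw [hlin, ContinuousLinearMap.fderiv]
  simp [prodInner]

theorem fderiv_prodInner_zero_left_comp {X : Type*} [NormedAddCommGroup X] [NormedSpace ℝ X]
    {f : X → EuclideanSpace ℝ (Fin l) × EuclideanSpace ℝ (Fin m)} {x : X}
    (hf : DifferentiableAt ℝ f x) (v : EuclideanSpace ℝ (Fin m)) (w : X) :
    fderiv ℝ (fun x => prodInner l m (0, v) (f x)) x w =
      inner ℝ v (fderiv ℝ (fun x => (f x).2) x w) := by
  simp only [prodInner_zero_left]
  change fderiv ℝ (innerSL ℝ v ∘ fun x => (f x).2) x w = _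
  rw [((innerSL ℝ v).hasFDerivAt.comp x hf.snd.hasFDerivAt).fderiv]
  rfl

end ProdInner

/-- For a C¹ vector field `a` on `ℝ^l × ℝ^m` tangent to `N = ℝ^l × {0}` along `N`, the
symbol `f(x,ξ) = ⟪ξ, a(x)⟫` at a conormal point `((x',0),(0,ξ''))` satisfies:
its `x`-derivative in the direction `(h,k)` is `⟪ξ'', B k⟫` with
`B = D_v a₂(x',v)|_{v=0}` (so it vanishes on `ℝ^l × {0}`), its `ξ`-gradient is
`(a₁(x',0), 0)` and its `x`-gradient is `(0, B*ξ'')`; hence the Hamiltonian field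
`H_f = (∇_ξ f, −∇_x f)` is tangent to the conormal bundle of `N` and equals
`((a₁(x',0), 0), (0, −B*ξ''))`. -/
theorem hamiltonian_of_symbol_at_conormal (l m : ℕ)
    (a : EuclideanSpace ℝ (Fin l) × EuclideanSpace ℝ (Fin m) →
         EuclideanSpace ℝ (Fin l) × EuclideanSpace ℝ (Fin m))
    (ha : ContDiff ℝ 1 a)
    (hatan : ∀ x' : EuclideanSpace ℝ (Fin l), (a (x', 0)).2 = 0)
    (x' : EuclideanSpace ℝ (Fin l)) (ξ'' : EuclideanSpace ℝ (Fin m)) :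
    let p : EuclideanSpace ℝ (Fin l) × EuclideanSpace ℝ (Fin m) := (x', 0)
    let ξ : EuclideanSpace ℝ (Fin l) × EuclideanSpace ℝ (Fin m) := (0, ξ'')
    let B := fderiv ℝ (fun v : EuclideanSpace ℝ (Fin m) => (a (x', v)).2) 0
    -- the `x`-derivative of the symbol at the conormal point:
    (∀ (h : EuclideanSpace ℝ (Fin l)) (k : EuclideanSpace ℝ (Fin m)),
        fderiv ℝ (fun x => prodInner l m ξ (a x)) p (h, k) = (inner ℝ ξ'' (B k) : ℝ)) ∧
    -- in particular it vanishes on `ℝ^l × {0}`: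
    (∀ h : EuclideanSpace ℝ (Fin l),
        fderiv ℝ (fun x => prodInner l m ξ (a x)) p (h, 0) = 0) ∧
    -- the `ξ`-gradient of the symbol is `(a₁(x',0), 0)`:
    (∀ w : EuclideanSpace ℝ (Fin l) × EuclideanSpace ℝ (Fin m),
        fderiv ℝ (fun ζ => prodInner l m ζ (a p)) ξ w = prodInner l m ((a p).1, 0) w) ∧
    -- the `x`-gradient of the symbol is `(0, B*ξ'')`:
    (∀ w : EuclideanSpace ℝ (Fin l) × EuclideanSpace ℝ (Fin m),
        fderiv ℝ (fun x => prodInner l m ξ (a x)) p w =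
          prodInner l m (0, ContinuousLinearMap.adjoint B ξ'') w) := by
  intro p ξ B
  have hda : DifferentiableAt ℝ a p := ha.differentiable one_ne_zero p
  have hsymbol (w) : fderiv ℝ (fun x => prodInner l m ξ (a x)) p w = inner ℝ ξ'' (B w.2) := by
    rw [fderiv_prodInner_zero_left_comp hda]
    exact congrArg _ (fderiv_apply_eq_fderiv_snd_of_const_fst hda.snd hatan w.1 w.2)
  refine ⟨fun h k => hsymbol (h, k), fun h => by simp [hsymbol], fun w => ?_, fun w => ?_⟩
  · have hap : a p = ((a p).1, 0) := Prod.ext rfl (hatan x')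
    rw [fderiv_prodInner_left, ← hap]
  · rw [hsymbol, prodInner_zero_left, adjoint_inner_left]
end

section
/- Let m be a natural number and A : ℝ → (ℝ^m →L[ℝ] ℝ^m) a continuous family of continuous linear maps, and let t₀, t₁ ∈ ℝ. Then there exists a linear equivalence P : ℝ^m ≃ₗ[ℝ] ℝ^m such that: (a) every curve η : ℝ → ℝ^m satisfying η'(t) = A(t)(η(t)) for all t ∈ ℝ satisfies η(t₁) = P(η(t₀)); and (b) for every v ∈ ℝ^m there exists a curve η : ℝ → ℝ^m with η'(t) = A(t)(η(t)) for all t ∈ ℝ and η(t₀) = v. (Existence and uniqueness of horizontal lifts of a curve provide linear isomorphisms Φ_{t₀,t₁} between fibers of the normal bundle — the parallel translation of the partial connection ∇.) -/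
/-!
Picard–Lindelöf solves `η' = A(t) η` on every interval that is short compared with a bound for
`‖A‖` on it, and since the equation is linear the admissible length does not depend on the initial
value. Gluing finitely many such pieces gives solutions on every compact interval, and uniqueness
(Grönwall) patches these into global solutions. Uniqueness together with linearity of the equation
makes `η t₀ ↦ η t₁` a well-defined linear map, whose inverse is `η t₁ ↦ η t₀`.
-/

open Set

open scoped NNReal

section

variable {E : Type*} [NormedAddCommGroup E] [NormedSpace ℝ E] {v : ℝ → E → E}
  {A : ℝ → E →L[ℝ] E}

lemma IsIntegralCurveOn.piecewise {γ₁ γ₂ : ℝ → E} {s₁ s₂ : Set ℝ} [∀ t, Decidable (t ∈ s₁)]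
    (hs₁ : IsClosed s₁) (hs₂ : IsClosed s₂) (hγ₁ : IsIntegralCurveOn γ₁ v s₁)
    (hγ₂ : IsIntegralCurveOn γ₂ v s₂) (heq : EqOn γ₁ γ₂ (s₁ ∩ s₂)) :
    IsIntegralCurveOn (s₁.piecewise γ₁ γ₂) v (s₁ ∪ s₂) := by
  have eqOn₂ : EqOn (s₁.piecewise γ₁ γ₂) γ₂ s₂ := fun t ht ↦ by
    by_cases h : t ∈ s₁
    · rw [piecewise_eq_of_mem _ _ _ h, heq ⟨h, ht⟩]
    · rw [piecewise_eq_of_notMem _ _ _ h]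
  intro t _
  refine HasDerivWithinAt.union ?_ ?_
  · by_cases h : t ∈ s₁
    · rw [piecewise_eq_of_mem _ _ _ h]
      exact (hγ₁ t h).congr (fun _ ↦ piecewise_eq_of_mem _ _ _) (piecewise_eq_of_mem _ _ _ h)
    · exact hasDerivWithinAt_iff_hasFDerivWithinAt.mpr
        (.of_notMem_closure (by rwa [hs₁.closure_eq]))
  · by_cases h : t ∈ s₂
    · rw [eqOn₂ h]
      exact (hγ₂ t h).congr eqOn₂ (eqOn₂ h)
    · exact hasDerivWithinAt_iff_hasFDerivWithinAt.mpr
        (.of_notMem_closure (by rwa [hs₂.closure_eq]))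

def ODESolvableOn (v : ℝ → E → E) (I : Set ℝ) : Prop :=
  ∀ s ∈ I, ∀ x : E, ∃ γ : ℝ → E, γ s = x ∧ IsIntegralCurveOn γ v I

lemma ODESolvableOn.Icc_union_Icc {a b c : ℝ} (hac : a ≤ c) (hcb : c ≤ b)
    (h₁ : ODESolvableOn v (Icc a c)) (h₂ : ODESolvableOn v (Icc c b)) :
    ODESolvableOn v (Icc a b) := by
  have glue : ∀ γ₁ γ₂ : ℝ → E, IsIntegralCurveOn γ₁ v (Icc a c) →
      IsIntegralCurveOn γ₂ v (Icc c b) → γ₁ c = γ₂ c →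
      IsIntegralCurveOn ((Icc a c).piecewise γ₁ γ₂) v (Icc a b) := by
    intro γ₁ γ₂ hγ₁ hγ₂ hc
    rw [← Icc_union_Icc_eq_Icc hac hcb]
    refine hγ₁.piecewise isClosed_Icc isClosed_Icc hγ₂ fun t ht ↦ ?_
    rwa [le_antisymm ht.1.2 ht.2.1]
  intro s hs x
  by_cases hsc : s ≤ c
  · obtain ⟨γ₁, hγ₁s, hγ₁⟩ := h₁ s ⟨hs.1, hsc⟩ x
    obtain ⟨γ₂, hγ₂c, hγ₂⟩ := h₂ c ⟨le_rfl, hcb⟩ (γ₁ c)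
    exact ⟨_, by rwa [piecewise_eq_of_mem _ _ _ (mem_Icc.mpr ⟨hs.1, hsc⟩)],
      glue γ₁ γ₂ hγ₁ hγ₂ hγ₂c.symm⟩
  · obtain ⟨γ₂, hγ₂s, hγ₂⟩ := h₂ s ⟨(not_le.mp hsc).le, hs.2⟩ x
    obtain ⟨γ₁, hγ₁c, hγ₁⟩ := h₁ c ⟨hac, le_rfl⟩ (γ₂ c)
    exact ⟨_, by rwa [piecewise_eq_of_notMem _ _ _ fun h ↦ hsc h.2], glue γ₁ γ₂ hγ₁ hγ₂ hγ₁c⟩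

lemma odeSolvableOn_Icc_of_subintervals {a b δ : ℝ} (hδ : 0 < δ)
    (h : ∀ c d, a ≤ c → d ≤ b → d - c ≤ δ → ODESolvableOn v (Icc c d)) :
    ODESolvableOn v (Icc a b) := by
  have key : ∀ n : ℕ, ∀ c, a ≤ c → c ≤ b → c ≤ a + n * δ → ODESolvableOn v (Icc a c) := by
    intro n
    induction n with
    | zero =>
      intro c _ hcb hc
      rw [Nat.cast_zero, zero_mul, add_zero] at hc
      exact h a c le_rfl hcb (by linarith)
    | succ n ih =>
      intro c hac hcb hc
      push_cast at hc
      set c' := max a (c - δ)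
      have hc'c : c' ≤ c := max_le hac (by linarith)
      have hc'n : c' ≤ a + n * δ := max_le (le_add_of_nonneg_right (by positivity)) (by linarith)
      exact (ih c' (le_max_left _ _) (hc'c.trans hcb) hc'n).Icc_union_Icc (le_max_left _ _) hc'c
        (h c' c (le_max_left _ _) hcb (by linarith [le_max_right a (c - δ)]))
  intro s hs
  obtain ⟨n, hn⟩ := exists_nat_ge ((b - a) / δ)
  exact key n b (hs.1.trans hs.2) le_rfl (by linarith [(div_le_iff₀ hδ).mp hn]) s hs

lemma odeSolvableOn_Icc_clm_of_norm_le [CompleteSpace E] {a b : ℝ} {K : ℝ≥0}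
    (hA : ContinuousOn A (Icc a b)) (hK : ∀ t ∈ Icc a b, ‖A t‖ ≤ K)
    (hab : 2 * K * (b - a) ≤ 1) :
    ODESolvableOn (fun t ↦ A t) (Icc a b) := by
  intro s hs x
  -- Linearity makes the admissible time step independent of `x`: work on the ball of radius
  -- `2‖x‖` about `0`.
  have hPL : IsPicardLindelof (fun t ↦ A t) ⟨s, hs⟩ 0 (2 * ‖x‖₊) ‖x‖₊ (K * (2 * ‖x‖₊)) K :=
    { lipschitzOnWith := fun t ht ↦
        ((A t).lipschitz.weaken (by exact_mod_cast hK t ht)).lipschitzOnWith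
      continuousOn := fun y _ ↦ hA.clm_apply continuousOn_const
      norm_le := fun t ht y hy ↦ by
        rw [mem_closedBall_zero_iff] at hy
        push_cast at hy ⊢
        exact (A t).le_of_opNorm_le (hK t ht) y |>.trans (by gcongr)
      mul_max_le := by
        have hmax : max (b - s) (s - a) ≤ b - a := max_le (by linarith [hs.1]) (by linarith [hs.2])
        push_cast
        calc K * (2 * ‖x‖) * max (b - s) (s - a) ≤ K * (2 * ‖x‖) * (b - a) := by gcongr
          _ = ‖x‖ * (2 * K * (b - a)) := by ring
          _ ≤ 2 * ‖x‖ - ‖x‖ := by nlinarith [norm_nonneg x] }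
  obtain ⟨γ, hγs, hγ⟩ := hPL.exists_eq_forall_mem_Icc_hasDerivWithinAt (x := x) (by simp)
  exact ⟨γ, hγs, hγ⟩

lemma odeSolvableOn_Icc_clm [CompleteSpace E] {a b : ℝ} (hA : ContinuousOn A (Icc a b)) :
    ODESolvableOn (fun t ↦ A t) (Icc a b) := by
  obtain ⟨C, hC⟩ := isCompact_Icc.exists_bound_of_continuousOn hA
  have hK : 0 < 2 * (C.toNNReal : ℝ) + 1 := by positivity
  refine odeSolvableOn_Icc_of_subintervals (inv_pos.mpr hK) fun c d hac hdb hcd ↦ ?_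
  refine odeSolvableOn_Icc_clm_of_norm_le (K := C.toNNReal) (hA.mono (Icc_subset_Icc hac hdb))
    (fun t ht ↦ (hC t (Icc_subset_Icc hac hdb ht)).trans C.le_coe_toNNReal) ?_
  calc 2 * (C.toNNReal : ℝ) * (d - c) ≤ 2 * C.toNNReal * (2 * (C.toNNReal : ℝ) + 1)⁻¹ := by
        gcongr
    _ ≤ 1 := by rw [← div_eq_mul_inv, div_le_one hK]; linarith

lemma eqOn_Ioo_of_hasDerivAt_clm {a b s : ℝ} {f g : ℝ → E} (hA : ContinuousOn A (Icc a b))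
    (hs : s ∈ Ioo a b) (hf : ∀ t ∈ Ioo a b, HasDerivAt f (A t (f t)) t)
    (hg : ∀ t ∈ Ioo a b, HasDerivAt g (A t (g t)) t) (heq : f s = g s) :
    EqOn f g (Ioo a b) := by
  obtain ⟨C, hC⟩ := isCompact_Icc.exists_bound_of_continuousOn hA
  have hlip : ∀ t ∈ Ioo a b, LipschitzOnWith C.toNNReal (A t) univ := fun t ht ↦
    ((A t).lipschitz.weaken (by
      rw [← NNReal.coe_le_coe, coe_nnnorm]
      exact (hC t (Ioo_subset_Icc_self ht)).trans C.le_coe_toNNReal)).lipschitzOnWith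
  exact ODE_solution_unique_of_mem_Ioo hlip hs (fun t ht ↦ ⟨hf t ht, mem_univ _⟩)
    (fun t ht ↦ ⟨hg t ht, mem_univ _⟩) heq

lemma IsIntegralCurve.eq_of_clm {η θ : ℝ → E} (hA : Continuous A)
    (hη : IsIntegralCurve η (fun t ↦ A t)) (hθ : IsIntegralCurve θ (fun t ↦ A t)) {s : ℝ}
    (heq : η s = θ s) : η = θ := by
  funext t
  have hs : s ∈ Ioo (min s t - 1) (max s t + 1) :=
    ⟨by linarith [min_le_left s t], by linarith [le_max_left s t]⟩
  exact eqOn_Ioo_of_hasDerivAt_clm hA.continuousOn hs (fun t _ ↦ hη t) (fun t _ ↦ hθ t) heq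
    ⟨by linarith [min_le_right s t], by linarith [le_max_right s t]⟩

lemma IsIntegralCurve.add_clm {η θ : ℝ → E} (hη : IsIntegralCurve η (fun t ↦ A t))
    (hθ : IsIntegralCurve θ (fun t ↦ A t)) : IsIntegralCurve (η + θ) (fun t ↦ A t) :=
  fun t ↦ by simpa only [Pi.add_apply, map_add] using (hη t).add (hθ t)

lemma IsIntegralCurve.const_smul_clm {η : ℝ → E} (hη : IsIntegralCurve η (fun t ↦ A t)) (c : ℝ) :
    IsIntegralCurve (c • η) (fun t ↦ A t) :=
  fun t ↦ by simpa only [Pi.smul_apply, map_smul] using (hη t).const_smul c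

lemma exists_isIntegralCurve_clm [CompleteSpace E] (hA : Continuous A) (s : ℝ) (x : E) :
    ∃ η : ℝ → E, η s = x ∧ IsIntegralCurve η (fun t ↦ A t) := by
  choose γ hγs hγ using fun n : ℕ ↦ odeSolvableOn_Icc_clm (a := s - n) (b := s + n)
    hA.continuousOn s (by constructor <;> linarith [n.cast_nonneg (α := ℝ)]) x
  have hderiv : ∀ n : ℕ, ∀ t ∈ Ioo (s - n) (s + n), HasDerivAt (γ n) (A t (γ n t)) t :=
    fun n t ht ↦ (hγ n t (Ioo_subset_Icc_self ht)).hasDerivAt (Icc_mem_nhds ht.1 ht.2)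
  have hcompat : ∀ m n : ℕ, m ≤ n → EqOn (γ m) (γ n) (Ioo (s - m) (s + m)) := by
    intro m n hmn t ht
    have hmn' : (m : ℝ) ≤ n := by exact_mod_cast hmn
    have hsub : Ioo (s - m) (s + m) ⊆ Ioo (s - n) (s + n) :=
      Ioo_subset_Ioo (by linarith) (by linarith)
    exact eqOn_Ioo_of_hasDerivAt_clm hA.continuousOn
      ⟨by linarith [ht.1, ht.2], by linarith [ht.1, ht.2]⟩
      (hderiv m) (fun t ht ↦ hderiv n t (hsub ht)) ((hγs m).trans (hγs n).symm) ht
  let N : ℝ → ℕ := fun t ↦ ⌊|t - s|⌋₊ + 1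
  have hN : ∀ t, t ∈ Ioo (s - N t) (s + N t) := fun t ↦ by
    have := abs_lt.mp (Nat.lt_floor_add_one |t - s|)
    simp only [N, Nat.cast_add, Nat.cast_one]
    exact ⟨by linarith, by linarith⟩
  refine ⟨fun t ↦ γ (N t) t, by simpa [N] using hγs 1, fun t ↦ ?_⟩
  refine (hderiv (N t) t (hN t)).congr_of_eventuallyEq ?_
  filter_upwards [Ioo_mem_nhds (hN t).1 (hN t).2] with t' ht'
  rcases le_total (N t') (N t) with h | h
  · exact hcompat _ _ h (hN t')
  · exact (hcompat _ _ h ht').symm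

lemma exists_linearMap_apply_eq_of_isIntegralCurve_clm [CompleteSpace E] (hA : Continuous A)
    (s t : ℝ) :
    ∃ P : E →ₗ[ℝ] E, ∀ η : ℝ → E, IsIntegralCurve η (fun t ↦ A t) → η t = P (η s) := by
  choose F hFs hF using exists_isIntegralCurve_clm hA s
  have hF_eq : ∀ η, IsIntegralCurve η (fun t ↦ A t) → F (η s) = η := fun η hη ↦
    (hF _).eq_of_clm hA hη (hFs _)
  refine ⟨{ toFun := fun x ↦ F x t, map_add' := fun x y ↦ ?_, map_smul' := fun c x ↦ ?_ },
    fun η hη ↦ (congrFun (hF_eq η hη) t).symm⟩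
  · have := hF_eq _ ((hF x).add_clm (hF y))
    simp only [Pi.add_apply, hFs] at this
    exact congrFun this t
  · have := hF_eq _ ((hF x).const_smul_clm c)
    simp only [Pi.smul_apply, hFs] at this
    exact congrFun this t

lemma exists_linearEquiv_apply_eq_of_isIntegralCurve_clm [CompleteSpace E] (hA : Continuous A)
    (s t : ℝ) :
    ∃ P : E ≃ₗ[ℝ] E, ∀ η : ℝ → E, IsIntegralCurve η (fun t ↦ A t) → η t = P (η s) := by
  obtain ⟨P, hP⟩ := exists_linearMap_apply_eq_of_isIntegralCurve_clm hA s t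
  obtain ⟨Q, hQ⟩ := exists_linearMap_apply_eq_of_isIntegralCurve_clm hA t s
  refine ⟨.ofLinearMap P Q (LinearMap.ext fun x ↦ ?_) (LinearMap.ext fun x ↦ ?_), hP⟩
  · obtain ⟨η, hηt, hη⟩ := exists_isIntegralCurve_clm hA t x
    simp [← hηt, ← hQ η hη, ← hP η hη]
  · obtain ⟨η, hηs, hη⟩ := exists_isIntegralCurve_clm hA s x
    simp [← hηs, ← hP η hη, ← hQ η hη]

end

/-- Existence and uniqueness of horizontal lifts provide linear isomorphisms between
fibers (parallel translation): for a continuous family `A(t)` of linear maps and times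
`t₀, t₁`, there is a linear equivalence `P` of `ℝ^m` such that every solution of
`η' = A(t) η` satisfies `η(t₁) = P(η(t₀))`, and every initial value at `t₀` is attained
by some solution. -/
theorem parallel_translation_linear_equiv (m : ℕ)
    (A : ℝ → (EuclideanSpace ℝ (Fin m) →L[ℝ] EuclideanSpace ℝ (Fin m)))
    (hA : Continuous A) (t₀ t₁ : ℝ) :
    ∃ P : EuclideanSpace ℝ (Fin m) ≃ₗ[ℝ] EuclideanSpace ℝ (Fin m),
      (∀ η : ℝ → EuclideanSpace ℝ (Fin m),
        (∀ t, HasDerivAt η (A t (η t)) t) → η t₁ = P (η t₀)) ∧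
      (∀ v : EuclideanSpace ℝ (Fin m),
        ∃ η : ℝ → EuclideanSpace ℝ (Fin m),
          (∀ t, HasDerivAt η (A t (η t)) t) ∧ η t₀ = v) := by
  obtain ⟨P, hP⟩ := exists_linearEquiv_apply_eq_of_isIntegralCurve_clm hA t₀ t₁
  exact ⟨P, hP, fun v ↦ (exists_isIntegralCurve_clm hA t₀ v).imp fun _ h ↦ h.symm⟩
end
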